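/- arXiv:math/0309447 — 6 statements merged into one kernel-verified Lean document; each statement's English description precedes it below -/
import Mathlib

section
/- If a partition β satisfies the difference condition (for all even indices i with β_{i+1} ≥ 1 one has β_i − β_{i+1} ≥ 3), then the map f of Definition 1.4 assigns the value 1 to every part of β; equivalently, the decomposition of β yields β = β^(1) with β^(2) = β^(3) = 0. -/
namespace Duckworth

/-- The recursive map `f` of Definition 1.4, computed along the list of parts.
`bk` is the value of the last part mapped to 1 (`none` if there is none yet),
`l` is the number of parts so far mapped to 1, `i` the number mapped to 0. -/
def fGo : Option ℕ → ℕ → ℕ → List ℕ → List Bool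
  | _, _, _, [] => []
  | bk, l, i, b :: rest =>
    let b1 := rest.getD 0 0
    let b3 := rest.getD 2 0
    let lEven := l % 2 == 0
    let iOdd := i % 2 == 1
    let c1 := lEven && decide (bk.getD (b + 3) ≤ b + 2)
    let c2 := lEven && iOdd && decide (b1 ≤ 1)
    let c3 := lEven && iOdd && decide (b1 ≤ b3 + 2) && decide (b3 ≠ 0) &&
      decide (b3 + 3 ≤ b)
    if c1 || c2 || c3 then
      false :: fGo bk l (i + 1) rest
    else
      true :: fGo (some b) (l + 1) i rest

/-- The list of `f`-values of the parts of `β` (in order). -/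
def fList (β : List ℕ) : List Bool := fGo none 0 0 β

/-- The sublist of parts of `β` whose `f`-value is `v`. -/
def selectBy (β : List ℕ) (v : Bool) : List ℕ :=
  ((β.zip (fList β)).filter (fun p => p.2 == v)).map Prod.fst

/-- `β⁽¹⁾`: the parts with `f`-value 1. -/
def beta1 (β : List ℕ) : List ℕ := selectBy β true

/-- `δ`: the parts with `f`-value 0. -/
def delta (β : List ℕ) : List ℕ := selectBy β false

/-- `β⁽²⁾`: the parts of `δ` with `f`-value 1. -/
def beta2 (β : List ℕ) : List ℕ := selectBy (delta β) true

/-- `β⁽³⁾`: the parts of `δ` with `f`-value 0. -/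
def beta3 (β : List ℕ) : List ℕ := selectBy (delta β) false

/-- A partition: a weakly decreasing list of positive integers. -/
def IsPartition (β : List ℕ) : Prop :=
  β.Pairwise (· ≥ ·) ∧ ∀ x ∈ β, 0 < x

/-- The `i`-th part (1-based); parts beyond the length are 0. -/
def part (β : List ℕ) (i : ℕ) : ℕ := β.getD (i - 1) 0

/-- The difference condition: for every even index `i` with `β_{i+1} ≥ 1`,
`β_i − β_{i+1} ≥ 3`. -/
def DiffCond (β : List ℕ) : Prop :=
  ∀ i, 0 < i → i % 2 = 0 → 1 ≤ part β (i + 1) → part β (i + 1) + 3 ≤ part β i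

/-- Hypotheses of Proposition 4.5: at most one part equal to 1, all other parts
even with multiplicity at most 2, and an even number of parts if no part is 1. -/
def GoodBeta (β : List ℕ) : Prop :=
  IsPartition β ∧ β.count 1 ≤ 1 ∧
  (∀ x ∈ β, x ≠ 1 → 2 ∣ x ∧ β.count x ≤ 2) ∧
  (1 ∉ β → 2 ∣ β.length)

/-- A bad sequence: an even index `i` with
`β_i = β_{i+1} > β_{i+2} = β_{i+3}`, `β_{i+1} − β_{i+2} = 2`, `β_{i+2} ≠ 0`. -/
def BadSeq (β : List ℕ) : Prop :=
  ∃ i, 0 < i ∧ i % 2 = 0 ∧ part β i = part β (i + 1) ∧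
    part β (i + 1) = part β (i + 2) + 2 ∧
    part β (i + 2) = part β (i + 3) ∧ part β (i + 2) ≠ 0

/-- The dual (conjugate) partition: `λ*_i = #{j : λ_j ≥ i}`. -/
def dual (β : List ℕ) : List ℕ :=
  (List.range (β.foldr max 0)).map (fun i => β.countP (fun x => decide (i + 1 ≤ x)))

/-- Invariant: at every even total count, the previous part exceeds the
current one by at least 3. -/
def Chain (bk : Option ℕ) (l : ℕ) (rest : List ℕ) : Prop :=
  ∀ k x, rest[k]? = some x → (l + k) % 2 = 0 →
    match k with
    | 0 => ∀ p, bk = some p → x + 3 ≤ p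
    | k' + 1 => ∃ y, rest[k']? = some y ∧ x + 3 ≤ y

lemma fGo_all_true : ∀ (rest : List ℕ) (bk : Option ℕ) (l : ℕ),
    Chain bk l rest → fGo bk l 0 rest = List.replicate rest.length true := by
  intro rest
  induction rest with
  | nil => intro bk l _; rfl
  | cons b rest ih =>
    intro bk l hc
    have hc1 : ¬ (l % 2 == 0 && decide (bk.getD (b + 3) ≤ b + 2)) = true := by
      intro h
      simp only [Bool.and_eq_true, beq_iff_eq, decide_eq_true_eq] at h
      obtain ⟨hl, hle⟩ := h
      cases bk with
      | none => rw [Option.getD_none] at hle; omega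
      | some p =>
        have := hc 0 b rfl (by simpa using hl) p rfl
        rw [Option.getD_some] at hle; omega
    have step : fGo bk l 0 (b :: rest) = true :: fGo (some b) (l + 1) 0 rest := by
      rw [fGo]
      simp only [Nat.zero_mod]
      rw [if_neg]
      intro h
      simp only [Bool.or_eq_true] at h
      rcases h with (h | h) | h
      · exact hc1 h
      · simp at h
      · simp at h
    rw [step]
    have hc' : Chain (some b) (l + 1) rest := by
      intro k x hk hpar
      cases k with
      | zero =>
        intro p hp
        injection hp with hp; subst hp
        have := hc 1 x (by simpa using hk) (by omega)
        obtain ⟨y, hy, hxy⟩ := this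
        simp only [List.getElem?_cons_zero] at hy
        injection hy with hy; omega
      | succ k' =>
        have := hc (k' + 2) x (by simpa using hk) (by omega)
        obtain ⟨y, hy, hxy⟩ := this
        exact ⟨y, by simpa using hy, hxy⟩
    rw [ih (some b) (l + 1) hc', List.length_cons, List.replicate_succ]

lemma fList_eq (β : List ℕ) (hβ : IsPartition β) (hd : DiffCond β) :
    fList β = List.replicate β.length true := by
  apply fGo_all_true
  intro k x hk hpar
  cases k with
  | zero => intro p hp; cases hp
  | succ k' =>
    have hklen : k' + 1 < β.length := List.getElem?_eq_some_iff.mp hk |>.1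
    have hx : β.getD (k' + 1) 0 = x := by
      rw [List.getD_eq_getElem?_getD, hk]; rfl
    have hxpos : 0 < x := hβ.2 x (List.mem_iff_getElem?.mpr ⟨_, hk⟩)
    have hpart : part β (k' + 1 + 1) = x := by
      simp only [part, Nat.add_sub_cancel]; exact hx
    have hdk := hd (k' + 1) (by omega) (by omega) (by rw [hpart]; omega)
    have hy : β[k']? = some (β.getD k' 0) := by
      rw [List.getD_eq_getElem?_getD]
      have : k' < β.length := by omega
      simp [List.getElem?_eq_getElem this]
    refine ⟨β.getD k' 0, hy, ?_⟩
    simp only [part, Nat.add_sub_cancel] at hdk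
    omega

/-- If a partition satisfies the difference condition, then `f` assigns the
value 1 to every part; equivalently `β = β⁽¹⁾` and `β⁽²⁾ = β⁽³⁾ = 0`. -/
theorem stmt0 (β : List ℕ) (hβ : IsPartition β) (hd : DiffCond β) :
    (∀ b ∈ fList β, b = true) ∧ beta1 β = β ∧ beta2 β = [] ∧ beta3 β = [] := by
  have hf := fList_eq β hβ hd
  have hall : ∀ b ∈ fList β, b = true := by
    intro b hb; rw [hf] at hb; exact (List.eq_of_mem_replicate hb)
  have hzip' : ∀ l : List ℕ, l.zip (List.replicate l.length true) =
      l.map (fun x => (x, true)) := by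
    intro l
    induction l with
    | nil => rfl
    | cons a t ih =>
      simp only [List.length_cons, List.replicate_succ, List.zip_cons_cons,
        List.map_cons, List.cons.injEq, true_and]
      exact ih
  have hzip : β.zip (fList β) = β.map (fun x => (x, true)) := by
    rw [hf]; exact hzip' β
  have key : ∀ (v : Bool) (l : List ℕ),
      ((l.map (fun x => (x, true))).filter (fun p : ℕ × Bool => p.2 == v)).map
        Prod.fst = if v then l else [] := by
    intro v l
    induction l with
    | nil => cases v <;> rfl
    | cons a t ih => cases v <;> simp_all
  have h1 : beta1 β = β := by
    simpa [beta1, selectBy, hzip] using key true β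
  have hδ : delta β = [] := by
    have h := key false β
    simp only [if_neg Bool.false_ne_true] at h
    simpa [delta, selectBy, hzip] using h
  refine ⟨hall, h1, ?_, ?_⟩ <;> simp [beta2, beta3, hδ, selectBy, fList, fGo]

end Duckworth
end

section
/- Let β be a partition with at most one part equal to 1, all other parts even of multiplicity at most 2, and, if β has no part equal to 1, an even number of parts. Let β^(1) and δ be the subpartitions on which the map f takes values 1 and 0 respectively. Then if β^(1) does not contain a part equal to 1 it has an even number of parts, and likewise if δ does not contain a part equal to 1 it has an even number of parts. -/
namespace Duckworth

lemma fGo_length (L : List ℕ) : ∀ bk l i, (fGo bk l i L).length = L.length := by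
  induction L with
  | nil => intro bk l i; rfl
  | cons b rest ih =>
    intro bk l i
    simp only [fGo]
    split <;> simp [ih]

lemma cc_tt (F : List Bool) : (true :: F).count true = F.count true + 1 := by simp
lemma cc_ft (F : List Bool) : (false :: F).count true = F.count true := by simp
lemma cc_ff (F : List Bool) : (false :: F).count false = F.count false + 1 := by simp
lemma cc_tf (F : List Bool) : (true :: F).count false = F.count false := by simp

lemma count_true_false (F : List Bool) : F.count true + F.count false = F.length := by
  induction F with
  | nil => rfl
  | cons b F ih => cases b <;> simp only [cc_tt, cc_ft, cc_ff, cc_tf, List.length_cons] <;> omega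

lemma main_nil : ∀ (es : List ℕ) (bk : Option ℕ) (l i : ℕ),
    (l % 2 = 1 → i % 2 = 1 → es ≠ []) →
    ¬((l + (fGo bk l i es).count true) % 2 = 1 ∧
      (i + (fGo bk l i es).count false) % 2 = 1) := by
  intro es
  induction es with
  | nil =>
    intro bk l i h
    simp only [fGo, List.count_nil]
    rintro ⟨h1, h2⟩
    exact h (by omega) (by omega) rfl
  | cons b rest ih =>
    intro bk l i h
    simp only [fGo]
    split
    · rename_i hc
      have hl0 : l % 2 = 0 := by
        by_contra hl
        have : l % 2 = 1 := by omega
        simp [this] at hc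
      have := ih bk l (i + 1) (by intro hl _; omega)
      simp only [cc_ft, cc_ff]
      omega
    · rename_i hc
      have := ih (some b) (l + 1) i ?_
      · simp only [cc_tt, cc_tf]
        omega
      · intro hl1 hi hr
        subst hr
        have hl0 : l % 2 = 0 := by omega
        simp [hl0, hi] at hc

lemma getLast?_cons_ne {α : Type*} (a : α) (L : List α) (h : L ≠ []) :
    (a :: L).getLast? = L.getLast? := by
  cases L with
  | nil => exact absurd rfl h
  | cons b M => simp [List.getLast?_cons_cons]

lemma main_one : ∀ (es : List ℕ) (bk : Option ℕ) (l i : ℕ),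
    (l % 2 = 1 → i % 2 = 1 → es ≠ []) →
    ((l + (fGo bk l i (es ++ [1])).count true) % 2 = 1 →
      (fGo bk l i (es ++ [1])).getLast? = some true) ∧
    ((i + (fGo bk l i (es ++ [1])).count false) % 2 = 1 →
      (fGo bk l i (es ++ [1])).getLast? = some false) := by
  intro es
  induction es with
  | nil =>
    intro bk l i h
    simp only [List.nil_append, fGo]
    split
    · rename_i hc
      have hl0 : l % 2 = 0 := by
        by_contra hl
        have : l % 2 = 1 := by omega
        simp [this] at hc
      constructor
      · intro hx
        simp only [cc_ft, List.count_nil] at hx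
        omega
      · intro _; rfl
    · rename_i hc
      constructor
      · intro _; rfl
      · intro hx
        simp only [cc_tf, List.count_nil] at hx
        have hi : i % 2 = 1 := by omega
        by_cases hl : l % 2 = 0
        · simp [hl, hi] at hc
        · exact absurd rfl (h (by omega) hi)
  | cons b rest ih =>
    intro bk l i h
    simp only [List.cons_append, fGo, List.append_eq]
    have hne : ∀ bk' l' i', fGo bk' l' i' (rest ++ [1]) ≠ [] := by
      intro bk' l' i' hnil
      have := fGo_length (rest ++ [1]) bk' l' i'
      rw [hnil] at this
      simp at this
    split
    · rename_i hc
      have hl0 : l % 2 = 0 := by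
        by_contra hl
        have : l % 2 = 1 := by omega
        simp [this] at hc
      have hih := ih bk l (i + 1) (by intro hl _; omega)
      rw [getLast?_cons_ne _ _ (hne _ _ _)]
      simp only [cc_ft, cc_ff]
      constructor
      · intro hx; exact hih.1 (by omega)
      · intro hx; exact hih.2 (by omega)
    · rename_i hc
      have hih := ih (some b) (l + 1) i ?_
      · rw [getLast?_cons_ne _ _ (hne _ _ _)]
        simp only [cc_tt, cc_tf]
        constructor
        · intro hx; exact hih.1 (by omega)
        · intro hx; exact hih.2 (by omega)
      · intro hl1 hi hr
        subst hr
        have hl0 : l % 2 = 0 := by omega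
        simp [hl0, hi] at hc

lemma filt_length (v : Bool) : ∀ (L : List ℕ) (F : List Bool), L.length = F.length →
    ((L.zip F).filter (fun p => p.2 == v)).length = F.count v := by
  intro L
  induction L with
  | nil =>
    intro F h
    cases F with
    | nil => simp
    | cons x F => simp at h
  | cons a L ih =>
    intro F h
    cases F with
    | nil => simp at h
    | cons x F =>
      have hl : L.length = F.length := by simpa using h
      simp only [List.zip_cons_cons, List.filter_cons, List.count_cons]
      by_cases hx : x = v
      · subst hx
        simp [ih F hl]
      · have hxv : (x == v) = false := by simp [hx]
        simp [hxv, ih F hl, hx]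

lemma sel_length (v : Bool) (L : List ℕ) (F : List Bool) (h : L.length = F.length) :
    (((L.zip F).filter (fun p => p.2 == v)).map Prod.fst).length = F.count v := by
  rw [List.length_map]
  exact filt_length v L F h

lemma mem_sel (es : List ℕ) (G : List Bool) (v : Bool) (hlen : es.length = G.length) :
    (1 : ℕ) ∈ ((((es ++ [1]).zip (G ++ [v])).filter (fun p : ℕ × Bool => p.2 == v)).map Prod.fst) := by
  have hz : (es ++ [1]).zip (G ++ [v]) = es.zip G ++ [((1 : ℕ), v)] :=
    List.zip_append hlen
  rw [hz]
  refine List.mem_map.mpr ⟨((1 : ℕ), v), ?_, rfl⟩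
  refine List.mem_filter.mpr ⟨by simp, by simp⟩

lemma last_one : ∀ (β : List ℕ), β.Pairwise (· ≥ ·) → (∀ x ∈ β, 0 < x) → (1 : ℕ) ∈ β →
    ∃ es, β = es ++ [1] := by
  intro β
  induction β with
  | nil => simp
  | cons b rest ih =>
    intro hs hp h1
    cases rest with
    | nil =>
      simp only [List.mem_singleton] at h1
      exact ⟨[], by simp [← h1]⟩
    | cons c r =>
      have hs' : (c :: r).Pairwise (· ≥ ·) := (List.pairwise_cons.mp hs).2
      have h1' : (1 : ℕ) ∈ c :: r := by
        rcases List.mem_cons.mp h1 with h | h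
        · have hc : b ≥ c := (List.pairwise_cons.mp hs).1 c (by simp)
          have hcp := hp c (by simp)
          have : c = 1 := by omega
          simp [this]
        · exact h
      obtain ⟨es, he⟩ := ih hs' (fun x hx => hp x (by simp [hx])) h1'
      exact ⟨b :: es, by simp [he]⟩

/-- If `β⁽¹⁾` (resp. `δ`) does not contain a part equal to 1, then it has an
even number of parts. -/
theorem stmt1 (β : List ℕ) (hβ : GoodBeta β) :
    ((1 : ℕ) ∉ beta1 β → 2 ∣ (beta1 β).length) ∧
    ((1 : ℕ) ∉ delta β → 2 ∣ (delta β).length) := by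
  obtain ⟨⟨hsort, hpos⟩, hcount, hmul, hlen⟩ := hβ
  have hlenF : (fList β).length = β.length := fGo_length β none 0 0
  have hb1 : (beta1 β).length = (fList β).count true :=
    sel_length true β (fList β) hlenF.symm
  have hd1 : (delta β).length = (fList β).count false :=
    sel_length false β (fList β) hlenF.symm
  have hsum : (fList β).count true + (fList β).count false = β.length := by
    rw [count_true_false, hlenF]
  by_cases h1 : (1 : ℕ) ∈ β
  · obtain ⟨es, rfl⟩ := last_one β hsort hpos h1
    have hmain := main_one es none 0 0 (by simp)
    have hF : fList (es ++ [1]) = fGo none 0 0 (es ++ [1]) := rfl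
    -- decompose F = G ++ [v]
    have hFne : fList (es ++ [1]) ≠ [] := by
      intro hnil
      rw [hnil] at hlenF
      simp at hlenF
    obtain ⟨G, v, hGv⟩ : ∃ G v, fList (es ++ [1]) = G ++ [v] := by
      rcases List.eq_nil_or_concat (fList (es ++ [1])) with h | ⟨G, v, h⟩
      · exact absurd h hFne
      · exact ⟨G, v, by rw [h, List.concat_eq_append]⟩
    have hGlen : es.length = G.length := by
      rw [hGv] at hlenF
      simp at hlenF
      omega
    constructor
    · intro hno
      by_contra hodd
      have hodd' : (0 + (fGo none 0 0 (es ++ [1])).count true) % 2 = 1 := by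
        rw [← hF]
        rw [hb1] at hodd
        omega
      have hlast := hmain.1 hodd'
      rw [← hF, hGv] at hlast
      rw [List.getLast?_concat] at hlast
      have hv : v = true := by simpa using hlast
      apply hno
      show (1 : ℕ) ∈ selectBy (es ++ [1]) true
      unfold selectBy
      rw [hGv, hv]
      exact mem_sel es G true hGlen
    · intro hno
      by_contra hodd
      have hodd' : (0 + (fGo none 0 0 (es ++ [1])).count false) % 2 = 1 := by
        rw [← hF]
        rw [hd1] at hodd
        omega
      have hlast := hmain.2 hodd'
      rw [← hF, hGv] at hlast
      rw [List.getLast?_concat] at hlast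
      have hv : v = false := by simpa using hlast
      apply hno
      show (1 : ℕ) ∈ selectBy (es ++ [1]) false
      unfold selectBy
      rw [hGv, hv]
      exact mem_sel es G false hGlen
  · have heven := hlen h1
    have hmain := main_nil β none 0 0 (by simp)
    have hF : fList β = fGo none 0 0 β := rfl
    rw [← hF] at hmain
    constructor <;> intro _ <;> [rw [hb1]; rw [hd1]] <;> omega

end Duckworth
end

section
/- Let β be a partition with at most one part equal to 1, all other parts even of multiplicity at most 2, and an even number of parts if no part equals 1; let β = β^(1) ⊕ β^(2) ⊕ β^(3) be the decomposition via the map f. Then β^(3) = 0 if and only if β can be written as a union (with multiplicity) of two partitions each of which satisfies the difference condition. -/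
namespace Duckworth

/-- Prop version of the branching condition of `fGo`. -/
def zcond (bk : Option ℕ) (l i b b1 b3 : ℕ) : Prop :=
  l % 2 = 0 ∧ (bk.getD (b + 3) ≤ b + 2 ∨
    (i % 2 = 1 ∧ (b1 ≤ 1 ∨ (b1 ≤ b3 + 2 ∧ b3 ≠ 0 ∧ b3 + 3 ≤ b))))

instance (bk l i b b1 b3) : Decidable (zcond bk l i b b1 b3) := by
  unfold zcond; infer_instance

lemma fGo_cons (bk : Option ℕ) (l i b : ℕ) (rest : List ℕ) :
    fGo bk l i (b :: rest) =
      if zcond bk l i b (rest.getD 0 0) (rest.getD 2 0) then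
        false :: fGo bk l (i + 1) rest
      else
        true :: fGo (some b) (l + 1) i rest := by
  show (if _ then _ else _) = _
  by_cases h : zcond bk l i b (rest.getD 0 0) (rest.getD 2 0)
  · rw [if_pos h, if_pos]
    obtain ⟨h1, h2⟩ := h
    simp only [Bool.or_eq_true, Bool.and_eq_true, decide_eq_true_eq, beq_iff_eq]
    rcases h2 with h2 | ⟨h3, h4 | ⟨h5, h6, h7⟩⟩
    · exact Or.inl (Or.inl ⟨h1, h2⟩)
    · exact Or.inl (Or.inr ⟨⟨h1, h3⟩, h4⟩)
    · exact Or.inr ⟨⟨⟨⟨h1, h3⟩, h5⟩, h6⟩, h7⟩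
  · rw [if_neg h, if_neg]
    simp only [Bool.or_eq_true, Bool.and_eq_true, decide_eq_true_eq, beq_iff_eq]
    rintro (((⟨h1, h2⟩ | ⟨⟨h1, h3⟩, h4⟩)) | ⟨⟨⟨⟨h1, h3⟩, h5⟩, h6⟩, h7⟩) <;>
      exact h ⟨h1, by tauto⟩



/-- The 1-parts of the run. -/
def ul (bk : Option ℕ) (l i : ℕ) : List ℕ → List ℕ
  | [] => []
  | b :: rest =>
    if zcond bk l i b (rest.getD 0 0) (rest.getD 2 0) then ul bk l (i + 1) rest
    else b :: ul (some b) (l + 1) i rest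

/-- The 0-parts of the run. -/
def dl (bk : Option ℕ) (l i : ℕ) : List ℕ → List ℕ
  | [] => []
  | b :: rest =>
    if zcond bk l i b (rest.getD 0 0) (rest.getD 2 0) then b :: dl bk l (i + 1) rest
    else dl (some b) (l + 1) i rest

lemma sel_eq (s : List ℕ) : ∀ bk l i,
    (((s.zip (fGo bk l i s)).filter (fun p => p.2 == true)).map Prod.fst = ul bk l i s) ∧
    (((s.zip (fGo bk l i s)).filter (fun p => p.2 == false)).map Prod.fst = dl bk l i s) := by
  induction s with
  | nil => intro bk l i; simp [fGo, ul, dl]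
  | cons b rest ih =>
    intro bk l i
    rw [fGo_cons]
    by_cases h : zcond bk l i b (rest.getD 0 0) (rest.getD 2 0)
    · rw [if_pos h]
      simp only [ul, dl, if_pos h, List.zip_cons_cons, List.filter_cons]
      constructor
      · simpa using (ih bk l (i+1)).1
      · simpa using (ih bk l (i+1)).2
    · rw [if_neg h]
      simp only [ul, dl, if_neg h, List.zip_cons_cons, List.filter_cons]
      constructor
      · simpa using (ih (some b) (l+1) i).1
      · simpa using (ih (some b) (l+1) i).2

lemma perm_ul_dl (s : List ℕ) : ∀ bk l i, s.Perm (ul bk l i s ++ dl bk l i s) := by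
  induction s with
  | nil => intro bk l i; simp [ul, dl]
  | cons b rest ih =>
    intro bk l i
    by_cases h : zcond bk l i b (rest.getD 0 0) (rest.getD 2 0)
    · simp only [ul, dl, if_pos h]
      exact ((ih bk l (i+1)).cons b).trans (List.perm_middle).symm
    · simp only [ul, dl, if_neg h, List.cons_append]
      exact (ih (some b) (l+1) i).cons b

lemma ul_sublist (s : List ℕ) : ∀ bk l i, (ul bk l i s).Sublist s := by
  induction s with
  | nil => intro bk l i; simp [ul]
  | cons b rest ih =>
    intro bk l i
    by_cases h : zcond bk l i b (rest.getD 0 0) (rest.getD 2 0)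
    · simp only [ul, if_pos h]; exact (ih bk l (i+1)).cons b
    · simp only [ul, if_neg h]; exact (ih (some b) (l+1) i).cons₂ b

lemma dl_sublist (s : List ℕ) : ∀ bk l i, (dl bk l i s).Sublist s := by
  induction s with
  | nil => intro bk l i; simp [dl]
  | cons b rest ih =>
    intro bk l i
    by_cases h : zcond bk l i b (rest.getD 0 0) (rest.getD 2 0)
    · simp only [dl, if_pos h]; exact (ih bk l (i+1)).cons₂ b
    · simp only [dl, if_neg h]; exact (ih (some b) (l+1) i).cons b



def chain : Bool → ℕ → List ℕ → Prop
  | _, _, [] => True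
  | false, _, b :: t => chain true b t
  | true, u, b :: t => b + 3 ≤ u ∧ chain false 0 t

@[simp] lemma chain_nil (m : Bool) (u : ℕ) : chain m u [] := by cases m <;> simp [chain]

lemma chain_consE (u b : ℕ) (t : List ℕ) : chain false u (b :: t) ↔ chain true b t := by
  simp [chain]

lemma chain_consP (u b : ℕ) (t : List ℕ) :
    chain true u (b :: t) ↔ (b + 3 ≤ u ∧ chain false 0 t) := by
  simp [chain]

lemma part_eq (M : List ℕ) (k : ℕ) : part M (k + 1) = M.getD k 0 := by
  simp [part]

lemma diff_cons2 (a b : ℕ) (M : List ℕ) :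
    DiffCond (a :: b :: M) ↔ ((1 ≤ part M 1 → part M 1 + 3 ≤ b) ∧ DiffCond M) := by
  have hpart : ∀ k, part (a :: b :: M) (k + 3) = part M (k + 1) := by
    intro k
    show (a :: b :: M).getD (k + 2) 0 = M.getD k 0
    simp
  have hpart2 : part (a :: b :: M) 2 = b := by simp [part]
  constructor
  · intro h
    constructor
    · intro h1
      have := h 2 (by norm_num) (by norm_num) (by rw [show (2:ℕ)+1 = 0+3 by rfl, hpart 0]; exact h1)
      rw [show (2:ℕ)+1 = 0+3 by rfl, hpart 0, hpart2] at this
      exact this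
    · intro i hi he h1
      have := h (i + 2) (by omega) (by omega)
        (by rw [show i+2+1 = i+3 by ring, hpart i]; exact h1)
      rw [show i+2+1 = i+3 by ring, hpart i] at this
      obtain ⟨j, rfl⟩ : ∃ j, i = j + 1 := ⟨i - 1, by omega⟩
      rw [show j+1+2 = j+3 by ring, hpart j] at this
      exact this
  · rintro ⟨h2, hM⟩ i hi he h1
    rcases Nat.lt_or_ge i 4 with h4 | h4
    · have : i = 2 := by omega
      subst this
      rw [show (2:ℕ)+1 = 0+3 by rfl, hpart 0, hpart2]
      rw [show (2:ℕ)+1 = 0+3 by rfl, hpart 0] at h1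
      exact h2 h1
    · obtain ⟨j, rfl⟩ : ∃ j, i = j + 4 := ⟨i - 4, by omega⟩
      rw [show j+4+1 = (j+2)+3 by ring, hpart (j+2)] at h1 ⊢
      rw [show j+4 = (j+1)+3 by ring, hpart (j+1)]
      exact hM (j + 2) (by omega) (by omega) h1

lemma diff_nil : DiffCond [] := by
  intro i hi he h1
  simp [part] at h1

lemma diff_single (a : ℕ) : DiffCond [a] := by
  intro i hi he h1
  exfalso
  have : i + 1 - 1 = i := by omega
  rw [part, this] at h1
  have : i ≥ 2 := by omega
  rcases i with _ | _ | i
  · omega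
  · omega
  · simp at h1

lemma chain_to_diff : ∀ n (L : List ℕ), L.length ≤ n → chain false 0 L.tail → DiffCond L := by
  intro n
  induction n with
  | zero =>
    intro L hL _
    have : L = [] := List.length_eq_zero_iff.mp (by omega)
    subst this; exact diff_nil
  | succ n ih =>
    intro L hL hc
    match L with
    | [] => exact diff_nil
    | [a] => exact diff_single a
    | a :: b :: M =>
      rw [diff_cons2]
      simp only [List.tail_cons] at hc
      rw [chain_consE] at hc
      constructor
      · intro h1
        match M with
        | [] => simp [part] at h1
        | c :: t =>
          rw [chain_consP] at hc
          have : part (c :: t) 1 = c := by simp [part]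
          rw [this]; rw [this] at h1
          exact hc.1
      · match M with
        | [] => exact diff_nil
        | c :: t =>
          rw [chain_consP] at hc
          refine ih (c :: t) (by simp at hL ⊢; omega) ?_
          simpa using hc.2

lemma diff_to_chain : ∀ n (L : List ℕ), L.length ≤ n → (∀ x ∈ L, 0 < x) → DiffCond L →
    chain false 0 L.tail := by
  intro n
  induction n with
  | zero =>
    intro L hL _ _
    have : L = [] := List.length_eq_zero_iff.mp (by omega)
    subst this; simp
  | succ n ih =>
    intro L hL hpos hd
    match L with
    | [] => simp
    | [a] => simp
    | a :: b :: M =>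
      simp only [List.tail_cons]
      rw [chain_consE]
      rw [diff_cons2] at hd
      match M with
      | [] => simp
      | c :: t =>
        rw [chain_consP]
        have hc : part (c :: t) 1 = c := by simp [part]
        constructor
        · apply hd.1
          rw [hc]
          exact hpos c (by simp)
        · have := ih (c :: t) (by simp at hL ⊢; omega)
            (fun x hx => hpos x (by simp at hx ⊢; tauto)) hd.2
          simpa using this


lemma zcond_odd_l (bk : Option ℕ) (l i b b1 b3 : ℕ) (h : l % 2 = 1) :
    ¬ zcond bk l i b b1 b3 := by
  intro hz; rw [zcond] at hz; omega

lemma zcond_some_even (v l i b b1 b3 : ℕ) (hl : l % 2 = 0) (hi : i % 2 = 0) :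
    zcond (some v) l i b b1 b3 ↔ v ≤ b + 2 := by
  constructor
  · rintro ⟨-, h | ⟨h1, -⟩⟩
    · exact h
    · omega
  · intro h; exact ⟨hl, Or.inl h⟩

/-- G1 auxiliary. -/
lemma dl_nil_iff_aux : ∀ n (L : List ℕ), L.length ≤ n → ∀ v l,
    (l % 2 = 0 → (dl (some v) l 0 L = [] ↔ chain true v L)) ∧
    (l % 2 = 1 → (dl (some v) l 0 L = [] ↔ chain false 0 L)) := by
  intro n
  induction n with
  | zero =>
    intro L hL v l
    have : L = [] := List.length_eq_zero_iff.mp (by omega)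
    subst this; simp [dl]
  | succ n ih =>
    intro L hL v l
    match L with
    | [] => simp [dl]
    | b :: rest =>
      simp only [List.length_cons] at hL
      constructor
      · intro hl
        by_cases hv : v ≤ b + 2
        · have hz : zcond (some v) l 0 b (rest.getD 0 0) (rest.getD 2 0) :=
            (zcond_some_even v l 0 b _ _ hl rfl).mpr hv
          rw [dl, if_pos hz, chain_consP]
          constructor
          · intro h; exact absurd h (by simp)
          · intro h; omega
        · have hz : ¬ zcond (some v) l 0 b (rest.getD 0 0) (rest.getD 2 0) := by
            rw [zcond_some_even v l 0 b _ _ hl rfl]; exact hv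
          rw [dl, if_neg hz, chain_consP]
          rw [(ih rest (by omega) b (l+1)).2 (by omega)]
          constructor
          · intro h; exact ⟨by omega, h⟩
          · tauto
      · intro hl
        have hz : ¬ zcond (some v) l 0 b (rest.getD 0 0) (rest.getD 2 0) :=
          zcond_odd_l _ _ _ _ _ _ hl
        rw [dl, if_neg hz, chain_consE]
        exact (ih rest (by omega) b (l+1)).1 (by omega)

lemma dl_none_nil_iff (L : List ℕ) : dl none 0 0 L = [] ↔ chain false 0 L.tail := by
  match L with
  | [] => simp [dl]
  | b :: rest =>
    have hz : ¬ zcond none 0 0 b (rest.getD 0 0) (rest.getD 2 0) := by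
      rintro ⟨-, h | ⟨h1, -⟩⟩
      · simp at h
      · omega
    rw [dl, if_neg hz]
    simpa using (dl_nil_iff_aux rest.length rest le_rfl b 1).2 rfl

/-- G2: the 1-parts always form a chain. -/
lemma ul_chain : ∀ n (s : List ℕ), s.length ≤ n → ∀ v l i,
    (l % 2 = 1 → chain false 0 (ul (some v) l i s)) ∧
    (l % 2 = 0 → chain true v (ul (some v) l i s)) := by
  intro n
  induction n with
  | zero =>
    intro s hs v l i
    have : s = [] := List.length_eq_zero_iff.mp (by omega)
    subst this; simp [ul]
  | succ n ih =>
    intro s hs v l i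
    match s with
    | [] => simp [ul]
    | b :: rest =>
      simp only [List.length_cons] at hs
      by_cases hz : zcond (some v) l i b (rest.getD 0 0) (rest.getD 2 0)
      · rw [ul, if_pos hz]
        exact ih rest (by omega) v l (i+1)
      · rw [ul, if_neg hz]
        constructor
        · intro hl
          rw [chain_consE]
          exact (ih rest (by omega) b (l+1) i).2 (by omega)
        · intro hl
          rw [chain_consP]
          constructor
          · by_contra hc
            exact hz ⟨hl, Or.inl (by rw [Option.getD_some]; omega)⟩
          · exact (ih rest (by omega) b (l+1) i).1 (by omega)

lemma ul_none_chain (L : List ℕ) : chain false 0 (ul none 0 0 L).tail := by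
  match L with
  | [] => simp [ul]
  | b :: rest =>
    have hz : ¬ zcond none 0 0 b (rest.getD 0 0) (rest.getD 2 0) := by
      rintro ⟨-, h | ⟨h1, -⟩⟩
      · simp at h
      · omega
    rw [ul, if_neg hz]
    simpa using (ul_chain rest.length rest le_rfl b 1 0).1 rfl



lemma drop_cons_succ {β : List ℕ} {m : ℕ} {x : ℕ} {u : List ℕ}
    (h : β.drop m = x :: u) : β.drop (m + 1) = u := by
  have : (β.drop m).drop 1 = β.drop (m + 1) := by rw [List.drop_drop]
  rw [← this, h]
  rfl

lemma getD_of_drop {β : List ℕ} {m : ℕ} {x : ℕ} {u : List ℕ}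
    (h : β.drop m = x :: u) : β.getD m 0 = x := by
  have h0 : (β.drop m).getD 0 0 = x := by rw [h]; rfl
  rw [List.getD_eq_getElem?_getD, ← h0, List.getD_eq_getElem?_getD,
    List.getElem?_drop, Nat.add_zero]

lemma part_of_drop {β : List ℕ} {m : ℕ} {x : ℕ} {u : List ℕ}
    (h : β.drop m = x :: u) : part β (m + 1) = x := by
  rw [part, Nat.add_sub_cancel]; exact getD_of_drop h

lemma mem_of_drop {β : List ℕ} {m : ℕ} {x : ℕ} (h : x ∈ β.drop m) : x ∈ β :=
  (List.drop_sublist m β).subset h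

lemma count_drop_le (β : List ℕ) (m : ℕ) (x : ℕ) : (β.drop m).count x ≤ β.count x :=
  (List.drop_sublist m β).count_le x

/-- Four consecutive parts within a band of width 2, starting at an even position,
force a bad sequence. -/
lemma four_window (β : List ℕ) (hβ : GoodBeta β) (m : ℕ) (a b c d : ℕ) (t : List ℕ)
    (hd : β.drop m = a :: b :: c :: d :: t) (hm : (m + 1) % 2 = 0) (hle : a ≤ d + 2) :
    BadSeq β := by
  obtain ⟨⟨hsort, hpos⟩, hcnt1, hcnt, -⟩ := hβ
  have hP : (a :: b :: c :: d :: t).Pairwise (· ≥ ·) := by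
    rw [← hd]; exact hsort.sublist (List.drop_sublist m β)
  have hab : a ≥ b := (List.pairwise_cons.mp hP).1 b (by simp)
  have hac : a ≥ c := (List.pairwise_cons.mp hP).1 c (by simp)
  have hbc : b ≥ c := by
    have := (List.pairwise_cons.mp hP).2
    exact (List.pairwise_cons.mp this).1 c (by simp)
  have hcd : c ≥ d := by
    have h2 := (List.pairwise_cons.mp hP).2
    have h3 := (List.pairwise_cons.mp h2).2
    exact (List.pairwise_cons.mp h3).1 d (by simp)
  have hbd : b ≥ d := le_trans hcd hbc
  have hdmem : d ∈ β := mem_of_drop (by rw [hd]; simp)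
  have hcmem : c ∈ β := mem_of_drop (by rw [hd]; simp)
  have hdpos : 0 < d := hpos d hdmem
  -- counts in the window
  have hcount : ∀ x, (a :: b :: c :: d :: t).count x ≤ β.count x := by
    intro x; rw [← hd]; exact count_drop_le β m x
  -- elements are 1 or even
  have heven : ∀ x ∈ β, x ≠ 1 → 2 ∣ x := fun x hx h1 => (hcnt x hx h1).1
  have hamem : a ∈ β := mem_of_drop (by rw [hd]; simp)
  have hbmem : b ∈ β := mem_of_drop (by rw [hd]; simp)
  -- show: a = b = d + 2, c = d, d even
  have key : a = d + 2 ∧ b = d + 2 ∧ c = d := by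
    rcases Nat.eq_or_lt_of_le hdpos with hd1 | hd2
    · -- d = 1
      exfalso
      have hd1 : d = 1 := hd1.symm
      subst hd1
      -- c ∈ [1,3], c ≠ 1 (count), c ≠ 3 (odd) → c = 2
      have hc1 : c ≠ 1 := by
        intro h
        have : (a :: b :: c :: 1 :: t).count 1 ≥ 2 := by
          subst h; simp [List.count_cons]; split_ifs <;> omega
        have := hcount 1
        omega
      have hc2 : c = 2 := by
        have := heven c hcmem hc1
        omega
      have hb2 : b = 2 := by
        have hbne : b ≠ 1 := by omega
        have := heven b hbmem hbne
        omega
      have ha2 : a = 2 := by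
        have hane : a ≠ 1 := by omega
        have := heven a hamem hane
        omega
      rw [hc2] at hcmem
      have : (a :: b :: c :: 1 :: t).count 2 ≥ 3 := by
        subst hc2; subst hb2; subst ha2; simp [List.count_cons]
      have hc := hcount 2
      have := hcnt 2 hcmem (by omega)
      omega
    · -- d ≥ 2, d even
      have hdne : d ≠ 1 := by omega
      have hdeven := heven d hdmem hdne
      have hceven : 2 ∣ c := heven c hcmem (by omega)
      have hc : c = d ∨ c = d + 2 := by omega
      rcases hc with hc | hc
      · -- c = d : count d = 2 already, b ∈ {d, d+2}
        have hbeven : 2 ∣ b := heven b hbmem (by omega)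
        have hb : b = d ∨ b = d + 2 := by omega
        rcases hb with hb | hb
        · exfalso
          have : (a :: b :: c :: d :: t).count d ≥ 3 := by
            subst hb; subst hc; simp [List.count_cons]; split_ifs <;> omega
          have h2 := hcount d
          have := hcnt d hdmem hdne
          omega
        · have haeven : 2 ∣ a := heven a hamem (by omega)
          have ha : a = d + 2 := by omega
          exact ⟨ha, hb, hc⟩
      · exfalso
        have hb : b = d + 2 := by
          have hbeven : 2 ∣ b := heven b hbmem (by omega)
          omega
        have ha : a = d + 2 := by
          have haeven : 2 ∣ a := heven a hamem (by omega)
          omega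
        rw [hc] at hcmem
        have : (a :: b :: c :: d :: t).count (d + 2) ≥ 3 := by
          subst ha; subst hb; simp [List.count_cons, hc]
        have h2 := hcount (d + 2)
        have := hcnt (d + 2) hcmem (by omega)
        omega
  obtain ⟨ha, hb, hc⟩ := key
  -- build the bad sequence at index m + 1
  have e1 : part β (m + 1) = a := part_of_drop hd
  have d2 := drop_cons_succ hd
  have e2 : part β (m + 2) = b := part_of_drop d2
  have d3 := drop_cons_succ d2
  have e3 : part β (m + 3) = c := part_of_drop d3
  have d4 := drop_cons_succ d3
  have e4 : part β (m + 4) = d := part_of_drop d4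
  refine ⟨m + 1, by omega, hm, ?_, ?_, ?_, ?_⟩
  · rw [e1, show m+1+1 = m+2 by ring, e2, ha, hb]
  · rw [show m+1+1 = m+2 by ring, e2, show m+1+2 = m+3 by ring, e3, hb, hc]
  · rw [show m+1+2 = m+3 by ring, e3, show m+1+3 = m+4 by ring, e4, hc]
  · rw [show m+1+2 = m+3 by ring, e3, hc]; omega



lemma not_zcond_even {v l i b b1 b3 : ℕ} (hl : l % 2 = 0)
    (h : ¬ zcond (some v) l i b b1 b3) :
    b + 3 ≤ v ∧ (i % 2 = 1 → 2 ≤ b1 ∧ ¬ (b1 ≤ b3 + 2 ∧ b3 ≠ 0 ∧ b3 + 3 ≤ b)) := by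
  rw [zcond, Option.getD_some] at h
  constructor
  · by_contra hc; exact h ⟨hl, Or.inl (by omega)⟩
  · intro hi
    constructor
    · by_contra hc; exact h ⟨hl, Or.inr ⟨hi, Or.inl (by omega)⟩⟩
    · intro hc; exact h ⟨hl, Or.inr ⟨hi, Or.inr hc⟩⟩

theorem main (β : List ℕ) (hβ : GoodBeta β) (hnb : ¬ BadSeq β) :
    ∀ n (s : List ℕ), s.length ≤ n → ∀ m a v l i w,
      β.drop (m - 1) = a :: s → 1 ≤ m → a ≤ v → m = l + i → l % 2 = 0 →
      (i % 2 = 1 → ∀ x y ys, s = x :: y :: ys → y + 3 ≤ v) →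
      (i % 2 = 0 → 1 ≤ i →
        (∀ x xs, s = x :: xs → v ≤ x + 2 → x + 3 ≤ w) ∧
        (∀ x y z zs, s = x :: y :: z :: zs → z + 3 ≤ w)) →
      (if i = 0 then chain false 0 (dl (some v) l i s).tail
       else if i % 2 = 1 then chain false 0 (dl (some v) l i s)
       else chain true w (dl (some v) l i s)) := by
  have hsort : β.Pairwise (· ≥ ·) := hβ.1.1
  have hpos : ∀ x ∈ β, 0 < x := hβ.1.2
  intro n
  induction n with
  | zero =>
    intro s hs m a v l i w _ _ _ _ _ _ _
    have : s = [] := List.length_eq_zero_iff.mp (by omega)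
    subst this
    split_ifs <;> simp [dl]
  | succ n ih =>
    intro s hs m a v l i w hA hm1 hav hmli hl hEO hEE
    have hS : β.drop m = s := by
      have := drop_cons_succ hA
      rwa [show m - 1 + 1 = m by omega] at this
    match s with
    | [] => split_ifs <;> simp [dl]
    | b :: rest =>
      simp only [List.length_cons] at hs
      have hPa : (a :: b :: rest).Pairwise (· ≥ ·) := by
        rw [← hA]; exact hsort.sublist (List.drop_sublist _ β)
      have hba : b ≤ a := (List.pairwise_cons.mp hPa).1 b (by simp)
      have hbv : b ≤ v := le_trans hba hav
      by_cases hz : zcond (some v) l i b (rest.getD 0 0) (rest.getD 2 0)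
      · -- b is a zero part
        rw [dl, if_pos hz]
        rcases Nat.even_or_odd i with ⟨j, hj⟩ | ⟨j, hj⟩
        · -- i even : the new zero has odd δ-index; next state is i+1 (odd)
          have hi2 : i % 2 = 0 := by omega
          -- establish the EO invariant for the next state
          have hEO' : ∀ x y ys, rest = x :: y :: ys → y + 3 ≤ v := by
            intro x y ys hr
            by_contra hy
            have hbs : BadSeq β := by
              refine four_window β hβ (m - 1) a b x y ys ?_ ?_ (by omega)
              · rw [hA, hr]
              · omega
            exact hnb hbs
          have H := ih rest (by omega) (m + 1) b v l (i + 1) w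
            (by rw [show m + 1 - 1 = m by omega]; exact hS) (by omega) hbv (by omega) hl
            (fun _ => hEO') (by intro h1 _; omega)
          rw [if_neg (by omega), if_pos (by omega)] at H
          by_cases hi0 : i = 0
          · rw [if_pos hi0]
            simp only [List.tail_cons]
            subst hi0
            exact H
          · rw [if_neg hi0, if_neg (by omega)]
            rw [chain_consP]
            have hvb : v ≤ b + 2 := (zcond_some_even v l i b _ _ hl hi2).mp hz
            refine ⟨(hEE hi2 (by omega)).1 b rest rfl hvb, H⟩
        · -- i odd : the new zero has even δ-index and pends
          have hi2 : i % 2 = 1 := by omega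
          rw [if_neg (by omega), if_pos hi2, chain_consE]
          have hpart2 : ∀ x y z zs, rest = x :: y :: z :: zs → z + 3 ≤ b := by
            intro x y z zs hr
            by_contra hzz
            have hbs : BadSeq β := by
              refine four_window β hβ m b x y z zs ?_ ?_ (by omega)
              · rw [hS, hr]
              · omega
            exact hnb hbs
          have hpart1 : ∀ x xs, rest = x :: xs → v ≤ x + 2 → x + 3 ≤ b := by
            intro x xs hr hvx
            have := hEO hi2 b x xs (by rw [hr])
            omega
          have H := ih rest (by omega) (m + 1) b v l (i + 1) b
            (by rw [show m + 1 - 1 = m by omega]; exact hS) (by omega) hbv (by omega) hl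
            (by intro h; omega) (fun _ _ => ⟨hpart1, hpart2⟩)
          rw [if_neg (by omega), if_neg (by omega)] at H
          exact H
      · -- b is a one part; the next part (if any) is also a one part
        rw [dl, if_neg hz]
        match rest with
        | [] =>
          show (if i = 0 then chain false 0 (dl (some b) (l+1) i []).tail
            else if i % 2 = 1 then chain false 0 (dl (some b) (l+1) i [])
            else chain true w (dl (some b) (l+1) i []))
          split_ifs <;> simp [dl]
        | b1 :: rest2 =>
          simp only [List.length_cons] at hs
          have hz2 : ¬ zcond (some b) (l + 1) i b1 (rest2.getD 0 0) (rest2.getD 2 0) :=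
            zcond_odd_l _ _ _ _ _ _ (by omega)
          rw [dl, if_neg hz2]
          have hb1b : b1 ≤ b := by
            have h2 := (List.pairwise_cons.mp hPa).2
            exact (List.pairwise_cons.mp h2).1 b1 (by simp)
          have hS1 : β.drop (m + 1) = b1 :: rest2 := drop_cons_succ hS
          have hnz := not_zcond_even hl hz
          -- EO invariant for the state after the pair
          have hEO'' : i % 2 = 1 → ∀ r1 r2 rs, rest2 = r1 :: r2 :: rs → r2 + 3 ≤ b1 := by
            intro hi2 x1 r2 rs hr
            by_contra hy
            have hr2pos : 0 < r2 := by
              refine hpos r2 (mem_of_drop (m := m) ?_)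
              rw [hS, hr]; simp
            have hbr2 : b ≤ r2 + 2 := by
              have h2 := (hnz.2 hi2).2
              rw [hr] at h2
              rw [show (b1 :: x1 :: r2 :: rs).getD 2 0 = r2 from rfl,
                show (b1 :: x1 :: r2 :: rs).getD 0 0 = b1 from rfl] at h2
              by_contra hc
              exact h2 ⟨by omega, by omega, by omega⟩
            have hbs : BadSeq β := by
              refine four_window β hβ m b b1 x1 r2 rs ?_ ?_ hbr2
              · rw [hS, hr]
              · omega
            exact hnb hbs
          -- EE invariant for the state after the pair
          have hEE'' : i % 2 = 0 → 1 ≤ i →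
              (∀ x xs, rest2 = x :: xs → b1 ≤ x + 2 → x + 3 ≤ w) ∧
              (∀ x y z zs, rest2 = x :: y :: z :: zs → z + 3 ≤ w) := by
            intro hi2 hi1
            have hEEc := hEE hi2 hi1
            constructor
            · intro x xs hr _
              exact hEEc.2 b b1 x xs (by rw [hr])
            · intro x y z zs hr
              have hx3 : x + 3 ≤ w := hEEc.2 b b1 x (y :: z :: zs) (by rw [hr])
              have hzx : z ≤ x := by
                have hPr : (x :: y :: z :: zs).Pairwise (· ≥ ·) := by
                  have h2 := (List.pairwise_cons.mp hPa).2
                  have h3 := (List.pairwise_cons.mp h2).2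
                  rw [hr] at h3
                  exact (List.pairwise_cons.mp h3).2
                exact (List.pairwise_cons.mp hPr).1 z (by simp)
              omega
          have H := ih rest2 (by omega) (m + 2) b1 b1 (l + 2) i w
            (by rw [show m + 2 - 1 = m + 1 by omega]; exact hS1) (by omega) le_rfl
            (by omega) (by omega)
            (by intro hi2 x y ys hr; exact hEO'' hi2 x y ys hr) hEE''
          exact H



/-- split a sorted list at a threshold -/
lemma split_sorted (t : ℕ) : ∀ (L : List ℕ), L.Pairwise (· ≥ ·) →
    ∃ P Q, L = P ++ Q ∧ P.length = L.countP (fun x => decide (t < x)) ∧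
      (∀ x ∈ P, t < x) ∧ (∀ x ∈ Q, x ≤ t) := by
  intro L
  induction L with
  | nil => intro _; exact ⟨[], [], by simp, by simp, by simp, by simp⟩
  | cons a L' ih =>
    intro hsort
    have hs' : L'.Pairwise (· ≥ ·) := hsort.of_cons
    by_cases ha : t < a
    · obtain ⟨P, Q, h1, h2, h3, h4⟩ := ih hs'
      refine ⟨a :: P, Q, by simp [h1], ?_, ?_, h4⟩
      · simp [List.countP_cons, ha, h2]
      · intro x hx
        rcases List.mem_cons.mp hx with rfl | hx
        · exact ha
        · exact h3 x hx
    · refine ⟨[], a :: L', by simp, ?_, by simp, ?_⟩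
      · rw [List.countP_eq_zero.mpr]
        · simp
        · intro x hx
          have hxa : x ≤ a := by
            rcases List.mem_cons.mp hx with rfl | hx
            · exact le_rfl
            · exact (List.pairwise_cons.mp hsort).1 x hx
          simp; omega
      · intro x hx
        have hxa : x ≤ a := by
          rcases List.mem_cons.mp hx with rfl | hx
          · exact le_rfl
          · exact (List.pairwise_cons.mp hsort).1 x hx
        omega

/-- capacity of a DiffCond partition in a window [c, c+2] -/
lemma cap (L : List ℕ) (hsort : L.Pairwise (· ≥ ·)) (hd : DiffCond L) (c : ℕ) (hc : 1 ≤ c) :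
    (L.countP (fun x => decide (c + 2 < x)) % 2 = 1 →
      L.countP (fun x => decide (c ≤ x ∧ x ≤ c + 2)) ≤ 1) ∧
    L.countP (fun x => decide (c ≤ x ∧ x ≤ c + 2)) ≤ 2 := by
  set A := L.countP (fun x => decide (c + 2 < x)) with hA
  set W := L.countP (fun x => decide (c ≤ x ∧ x ≤ c + 2)) with hW
  obtain ⟨P, Q, hPQ, hPlen, hPgt, hQle⟩ := split_sorted (c + 2) L hsort
  have hQsort : Q.Pairwise (· ≥ ·) := by
    rw [hPQ] at hsort
    exact hsort.sublist (List.sublist_append_right P Q)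
  obtain ⟨R, S, hRS, hRlen, hRgt, hSle⟩ := split_sorted (c - 1) Q hQsort
  -- W = R.length
  have hWR : W = R.length := by
    rw [hW, hPQ, List.countP_append]
    have h1 : P.countP (fun x => decide (c ≤ x ∧ x ≤ c + 2)) = 0 := by
      rw [List.countP_eq_zero]
      intro x hx
      have := hPgt x hx
      simp; omega
    have h2 : Q.countP (fun x => decide (c ≤ x ∧ x ≤ c + 2)) =
        Q.countP (fun x => decide (c - 1 < x)) := by
      apply List.countP_congr
      intro x hx
      have := hQle x hx
      simp; omega
    rw [h1, h2, ← hRlen]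
    omega
  -- elements of R are in the window
  have hRwin : ∀ x ∈ R, c ≤ x ∧ x ≤ c + 2 := by
    intro x hx
    have h1 := hRgt x hx
    have h2 : x ∈ Q := by rw [hRS]; exact List.mem_append_left S hx
    have h3 := hQle x h2
    omega
  -- part values
  have hLP : L = P ++ R ++ S := by rw [hPQ, hRS, List.append_assoc]
  have hpart : ∀ k, part L (P.length + k + 1) = (R ++ S).getD k 0 := by
    intro k
    rw [part, Nat.add_sub_cancel, hLP, List.append_assoc,
      List.getD_append_right P (R ++ S) 0 (P.length + k) (by omega)]
    congr 1
    omega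
  constructor
  · intro hAodd
    by_contra hW2
    have hW2 : 2 ≤ W := by omega
    obtain ⟨r0, r1, R', hR⟩ : ∃ r0 r1 R', R = r0 :: r1 :: R' := by
      rcases R with _ | ⟨r0, _ | ⟨r1, R'⟩⟩
      · simp at hWR; omega
      · simp at hWR; omega
      · exact ⟨r0, r1, R', rfl⟩
    have e0 : part L (P.length + 0 + 1) = r0 := by rw [hpart 0, hR]; rfl
    have e1 : part L (P.length + 1 + 1) = r1 := by rw [hpart 1, hR]; rfl
    have hr0 := hRwin r0 (by rw [hR]; simp)
    have hr1 := hRwin r1 (by rw [hR]; simp)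
    have hcon := hd (P.length + 1) (by omega) (by omega)
      (by rw [show P.length + 1 + 1 = P.length + 1 + 1 from rfl, e1]; omega)
    rw [e1] at hcon
    rw [show P.length + 1 = P.length + 0 + 1 from by ring, e0] at hcon
    omega
  · by_contra hW3
    have hW3 : 3 ≤ W := by omega
    rcases Nat.even_or_odd A with ⟨j, hj⟩ | ⟨j, hj⟩
    swap
    · -- A odd handled by first part... but we are proving second; do directly
      obtain ⟨r0, r1, R', hR⟩ : ∃ r0 r1 R', R = r0 :: r1 :: R' := by
        rcases R with _ | ⟨r0, _ | ⟨r1, R'⟩⟩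
        · simp at hWR; omega
        · simp at hWR; omega
        · exact ⟨r0, r1, R', rfl⟩
      have e0 : part L (P.length + 0 + 1) = r0 := by rw [hpart 0, hR]; rfl
      have e1 : part L (P.length + 1 + 1) = r1 := by rw [hpart 1, hR]; rfl
      have hr0 := hRwin r0 (by rw [hR]; simp)
      have hr1 := hRwin r1 (by rw [hR]; simp)
      have hcon := hd (P.length + 1) (by omega) (by rw [hPlen, ← hA]; omega)
        (by rw [e1]; omega)
      rw [e1] at hcon
      rw [show P.length + 1 = P.length + 0 + 1 from by ring, e0] at hcon
      omega
    · obtain ⟨r0, r1, r2, R', hR⟩ : ∃ r0 r1 r2 R', R = r0 :: r1 :: r2 :: R' := by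
        rcases R with _ | ⟨r0, _ | ⟨r1, _ | ⟨r2, R'⟩⟩⟩
        · simp at hWR; omega
        · simp at hWR; omega
        · simp at hWR; omega
        · exact ⟨r0, r1, r2, R', rfl⟩
      have e1 : part L (P.length + 1 + 1) = r1 := by rw [hpart 1, hR]; rfl
      have e2 : part L (P.length + 2 + 1) = r2 := by rw [hpart 2, hR]; rfl
      have hr1 := hRwin r1 (by rw [hR]; simp)
      have hr2 := hRwin r2 (by rw [hR]; simp)
      have hcon := hd (P.length + 2) (by omega) (by rw [hPlen, ← hA]; omega)
        (by rw [show P.length + 2 + 1 = P.length + 2 + 1 from rfl, e2]; omega)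
      rw [e2] at hcon
      rw [show P.length + 2 = P.length + 1 + 1 from by ring, e1] at hcon
      omega



lemma drop_part (β : List ℕ) (k : ℕ) (h : k < β.length) :
    β.drop k = part β (k + 1) :: β.drop (k + 1) := by
  rw [part, Nat.add_sub_cancel, List.getD_eq_getElem β 0 h]
  exact List.drop_eq_getElem_cons h

lemma no_split (β : List ℕ) (hβ : GoodBeta β) (bs : BadSeq β) (μ ν : List ℕ)
    (hμ : IsPartition μ) (hν : IsPartition ν) (hperm : β.Perm (μ ++ ν))
    (dμ : DiffCond μ) (dν : DiffCond ν) : False := by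
  obtain ⟨⟨hsort, hpos⟩, hcnt1, hcnt, -⟩ := hβ
  obtain ⟨i0, hi0, hie, h1, h2, h3, h4⟩ := bs
  set c := part β (i0 + 2) with hc
  have hc1 : 1 ≤ c := by omega
  have hlen : i0 + 2 < β.length := by
    by_contra h
    have : part β (i0 + 3) = 0 := by
      rw [part]
      exact List.getD_eq_default _ _ (by omega)
    omega
  have hi02 : 2 ≤ i0 := by omega
  have E : β.drop (i0 - 1) = (c + 2) :: (c + 2) :: c :: c :: β.drop (i0 + 3) := by
    have d0 := drop_part β (i0 - 1) (by omega)
    rw [show i0 - 1 + 1 = i0 by omega] at d0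
    have d1 := drop_part β i0 (by omega)
    have d2 := drop_part β (i0 + 1) (by omega)
    have d3 := drop_part β (i0 + 2) (by omega)
    rw [d0, d1, d2, d3, h1, h2, ← h3, ← hc]
  have hrest_le : ∀ x ∈ β.drop (i0 + 3), x ≤ c := by
    intro x hx
    have hP : ((c + 2) :: (c + 2) :: c :: c :: β.drop (i0 + 3)).Pairwise (· ≥ ·) := by
      rw [← E]; exact hsort.sublist (List.drop_sublist _ β)
    have h2 := (List.pairwise_cons.mp hP).2
    have h3 := (List.pairwise_cons.mp h2).2
    have h4 := (List.pairwise_cons.mp h3).2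
    exact (List.pairwise_cons.mp h4).1 x hx
  have hc2mem : c + 2 ∈ β := by
    refine mem_of_drop (m := i0 - 1) ?_
    rw [E]; simp
  have hcmem : c ∈ β := by
    refine mem_of_drop (m := i0 - 1) ?_
    rw [E]; simp
  have hcne1 : c ≠ 1 := by
    intro hc1'
    have : ((c + 2) :: (c + 2) :: c :: c :: β.drop (i0 + 3)).count 1 ≥ 2 := by
      rw [hc1']; simp [List.count_cons]
    have hle : ((c + 2) :: (c + 2) :: c :: c :: β.drop (i0 + 3)).count 1 ≤ β.count 1 := by
      rw [← E]; exact (List.drop_sublist _ β).count_le 1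
    omega
  have hcount_drop : ∀ x, ((c+2) :: (c+2) :: c :: c :: β.drop (i0+3)).count x ≤ β.count x := by
    intro x; rw [← E]; exact (List.drop_sublist _ β).count_le x
  -- split β as take ++ drop
  have hsplit : β.take (i0 - 1) ++ β.drop (i0 - 1) = β := List.take_append_drop _ β
  have htake_big : ∀ x ∈ β.take (i0 - 1), c + 2 < x := by
    intro x hx
    have hge : x ≥ c + 2 := by
      have hP : β.Pairwise (· ≥ ·) := hsort
      rw [← hsplit] at hP
      have := (List.pairwise_append.mp hP).2.2 x hx (c + 2) (by rw [E]; simp)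
      exact this
    rcases Nat.eq_or_lt_of_le hge with heq | hlt
    · exfalso
      have hcnt2 : β.count (c + 2) ≤ 2 := (hcnt (c + 2) hc2mem (by omega)).2
      have hdropc : ((c+2) :: (c+2) :: c :: c :: β.drop (i0+3)).count (c+2) ≥ 2 := by
        simp [List.count_cons]
      have htakec : 0 < (β.take (i0 - 1)).count (c + 2) := by
        rw [List.count_pos_iff, heq]
        exact hx
      have hcc : β.count (c + 2) = (β.take (i0-1)).count (c+2) + (β.drop (i0-1)).count (c+2) := by
        conv_lhs => rw [← hsplit]
        rw [List.count_append]
      rw [E] at hcc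
      omega
    · exact hlt
  have hlen_take : (β.take (i0 - 1)).length = i0 - 1 := by
    rw [List.length_take]; omega
  -- A = i0 - 1
  have hA : β.countP (fun x => decide (c + 2 < x)) = i0 - 1 := by
    rw [← hsplit, List.countP_append]
    have e1 : (β.take (i0-1)).countP (fun x => decide (c + 2 < x)) = i0 - 1 := by
      rw [List.countP_eq_length.mpr, hlen_take]
      intro x hx; simpa using htake_big x hx
    have e2 : (β.drop (i0-1)).countP (fun x => decide (c + 2 < x)) = 0 := by
      rw [E, List.countP_eq_zero]
      intro x hx
      simp only [List.mem_cons] at hx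
      have : x ≤ c + 2 := by
        rcases hx with rfl | rfl | rfl | rfl | hx
        · omega
        · omega
        · omega
        · omega
        · have := hrest_le x hx; omega
      simp; omega
    rw [e1, e2]
    omega
  -- W = 4
  have hW : β.countP (fun x => decide (c ≤ x ∧ x ≤ c + 2)) = 4 := by
    rw [← hsplit, List.countP_append]
    have e1 : (β.take (i0-1)).countP (fun x => decide (c ≤ x ∧ x ≤ c + 2)) = 0 := by
      rw [List.countP_eq_zero]
      intro x hx
      have := htake_big x hx
      simp; omega
    have e2 : (β.drop (i0-1)).countP (fun x => decide (c ≤ x ∧ x ≤ c + 2)) = 4 := by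
      rw [E]
      have e3 : (β.drop (i0+3)).countP (fun x => decide (c ≤ x ∧ x ≤ c + 2)) = 0 := by
        rw [List.countP_eq_zero]
        intro x hx
        have hxc := hrest_le x hx
        rcases Nat.eq_or_lt_of_le hxc with heq | hlt
        · exfalso
          have hcntc : β.count c ≤ 2 := (hcnt c hcmem hcne1).2
          have hpos' : 0 < (β.drop (i0+3)).count c := List.count_pos_iff.mpr (heq ▸ hx)
          have hcc : ((c+2) :: (c+2) :: c :: c :: β.drop (i0+3)).count c
              = (β.drop (i0+3)).count c + 2 := by
            simp [List.count_cons]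
          have : ((c+2) :: (c+2) :: c :: c :: β.drop (i0+3)).count c ≥ 3 := by omega
          have := hcount_drop c
          omega
        · simp; omega
      simp only [List.countP_cons, e3]
      have h1 : (decide (c ≤ c + 2 ∧ c + 2 ≤ c + 2)) = true := by simp
      have h2 : (decide (c ≤ c ∧ c ≤ c + 2)) = true := by simp
      rw [h1, h2]
      norm_num
    rw [e1, e2]
  -- transfer to μ, ν
  have hAμν : μ.countP (fun x => decide (c + 2 < x)) + ν.countP (fun x => decide (c + 2 < x)) = i0 - 1 := by
    rw [← List.countP_append, ← hperm.countP_eq, hA]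
  have hWμν : μ.countP (fun x => decide (c ≤ x ∧ x ≤ c + 2)) + ν.countP (fun x => decide (c ≤ x ∧ x ≤ c + 2)) = 4 := by
    rw [← List.countP_append, ← hperm.countP_eq, hW]
  have capμ := cap μ hμ.1 dμ c hc1
  have capν := cap ν hν.1 dν c hc1
  have hodd : (i0 - 1) % 2 = 1 := by omega
  rcases Nat.even_or_odd (μ.countP (fun x => decide (c + 2 < x))) with ⟨j, hj⟩ | ⟨j, hj⟩
  · have hνodd : ν.countP (fun x => decide (c + 2 < x)) % 2 = 1 := by omega
    have := capν.1 hνodd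
    have := capμ.2
    omega
  · have hμodd : μ.countP (fun x => decide (c + 2 < x)) % 2 = 1 := by omega
    have := capμ.1 hμodd
    have := capν.2
    omega


theorem stmt3' (β : List ℕ) (hβ : GoodBeta β) :
    beta3 β = [] ↔
      ∃ μ ν : List ℕ, IsPartition μ ∧ IsPartition ν ∧ β.Perm (μ ++ ν) ∧
        DiffCond μ ∧ DiffCond ν := by
  have hsort : β.Pairwise (· ≥ ·) := hβ.1.1
  have hpos : ∀ x ∈ β, 0 < x := hβ.1.2
  have hb1 : beta1 β = ul none 0 0 β := (sel_eq β none 0 0).1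
  have hδ : delta β = dl none 0 0 β := (sel_eq β none 0 0).2
  have hb3 : beta3 β = dl none 0 0 (delta β) := (sel_eq (delta β) none 0 0).2
  constructor
  · intro h3
    refine ⟨beta1 β, delta β, ?_, ?_, ?_, ?_, ?_⟩
    · rw [hb1]
      exact ⟨List.Pairwise.sublist (ul_sublist β none 0 0) hsort,
        fun x hx => hpos x ((ul_sublist β none 0 0).subset hx)⟩
    · rw [hδ]
      exact ⟨List.Pairwise.sublist (dl_sublist β none 0 0) hsort,
        fun x hx => hpos x ((dl_sublist β none 0 0).subset hx)⟩
    · rw [hb1, hδ]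
      exact perm_ul_dl β none 0 0
    · refine chain_to_diff (beta1 β).length (beta1 β) le_rfl ?_
      rw [hb1]
      exact ul_none_chain β
    · rw [hb3] at h3
      exact chain_to_diff (delta β).length (delta β) le_rfl
        ((dl_none_nil_iff (delta β)).mp h3)
  · rintro ⟨μ, ν, hμ, hν, hperm, dμ, dν⟩
    have hnb : ¬ BadSeq β := fun bs => no_split β hβ bs μ ν hμ hν hperm dμ dν
    rw [hb3, dl_none_nil_iff, hδ]
    rcases hE : β with - | ⟨b, rest⟩
    · simp [dl]
    · rcases hE2 : rest with - | ⟨b1, t⟩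
      · have hz0 : ¬ zcond none 0 0 b (([] : List ℕ).getD 0 0) (([] : List ℕ).getD 2 0) := by
          rintro ⟨-, h | ⟨h1, -⟩⟩
          · simp at h
          · omega
        rw [dl, if_neg hz0, dl]
        simp
      · have hz0 : ¬ zcond none 0 0 b ((b1 :: t).getD 0 0) ((b1 :: t).getD 2 0) := by
          rintro ⟨-, h | ⟨h1, -⟩⟩
          · simp at h
          · omega
        have hz1 : ¬ zcond (some b) 1 0 b1 (t.getD 0 0) (t.getD 2 0) :=
          zcond_odd_l _ _ _ _ _ _ rfl
        rw [dl, if_neg hz0, dl, if_neg hz1]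
        have hA : β.drop (2 - 1) = b1 :: t := by rw [hE, hE2]; rfl
        have H := main β hβ hnb t.length t le_rfl 2 b1 b1 2 0 0 hA (by omega) le_rfl
          rfl rfl (by intro h; omega) (by intro _ h1; omega)
        rw [if_pos rfl] at H
        exact H

/-- `β⁽³⁾ = 0` iff `β` can be written as a union (with multiplicity) of two
partitions each of which satisfies the difference condition. -/
theorem stmt3 (β : List ℕ) (hβ : GoodBeta β) :
    beta3 β = [] ↔
      ∃ μ ν : List ℕ, IsPartition μ ∧ IsPartition ν ∧ β.Perm (μ ++ ν) ∧
        DiffCond μ ∧ DiffCond ν := stmt3' β hβ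

end Duckworth
end

section
/- If a partition β contains a bad sequence — an even index j with β_j = β_{j+1} > β_{j+2} = β_{j+3}, β_{j+1} − β_{j+2} = 2, and β_{j+3} ≠ 0 — then β cannot be written as a union (with multiplicity) of two partitions each of which satisfies the difference condition. -/
namespace Duckworth

lemma count_char (t : ℕ) (ht : 1 ≤ t) :
    ∀ (L : List ℕ), L.Pairwise (· ≥ ·) →
      ∀ k, (t ≤ L.getD k 0 ↔ k < L.countP (fun x => decide (t ≤ x))) := by
  intro L
  induction L with
  | nil => intro _ k; simp; omega
  | cons x L ih =>
    intro hs k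
    obtain ⟨hx, hL⟩ := List.pairwise_cons.mp hs
    have hcp : (x :: L).countP (fun x => decide (t ≤ x)) =
        L.countP (fun x => decide (t ≤ x)) + (if t ≤ x then 1 else 0) := by
      simp [List.countP_cons]
    by_cases h : t ≤ x
    · cases k with
      | zero => simp [hcp, h]
      | succ k =>
        rw [List.getD_cons_succ, hcp, ih hL k]
        simp [h]
    · have hz : L.countP (fun x => decide (t ≤ x)) = 0 := by
        apply List.countP_eq_zero.mpr
        intro y hy
        have := hx y hy
        simp; omega
      cases k with
      | zero => simp [hcp, h, hz]
      | succ k =>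
        rw [List.getD_cons_succ, hcp, hz, ih hL k, hz]
        simp [h]

lemma count_split (a : ℕ) (L : List ℕ) :
    L.countP (fun x => decide (a ≤ x)) =
      L.countP (fun x => decide (a + 3 ≤ x)) +
        L.countP (fun x => decide (a ≤ x ∧ x < a + 3)) := by
  induction L with
  | nil => simp
  | cons x L ih =>
    simp only [List.countP_cons, decide_eq_true_eq, ih]
    split_ifs <;> omega

lemma window_lemma (μ : List ℕ) (hs : μ.Pairwise (· ≥ ·)) (hd : DiffCond μ)
    (a : ℕ) (ha : 1 ≤ a) :
    μ.countP (fun x => decide (a ≤ x ∧ x < a + 3)) ≤ 2 ∧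
    (μ.countP (fun x => decide (a ≤ x ∧ x < a + 3)) = 2 →
      μ.countP (fun x => decide (a + 3 ≤ x)) % 2 = 0) := by
  set A := μ.countP (fun x => decide (a + 3 ≤ x)) with hA
  set G := μ.countP (fun x => decide (a ≤ x)) with hG
  have hsplit := count_split a μ
  have hup : ∀ k, A ≤ k → μ.getD k 0 < a + 3 := by
    intro k hk
    have := count_char (a + 3) (by omega) μ hs k
    omega
  have hlo : ∀ k, k < G → a ≤ μ.getD k 0 := by
    intro k hk
    have := count_char a ha μ hs k
    omega
  have hpart : ∀ k, part μ (k + 1) = μ.getD k 0 := by intro k; simp [part]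
  constructor
  · by_contra hW
    have hG3 : A + 2 < G := by omega
    by_cases hAe : A % 2 = 0
    · have h1 := hlo (A + 2) hG3
      have h2 := hup (A + 1) (by omega)
      have := hd (A + 2) (by omega) (by omega)
        (by rw [hpart (A + 2)]; omega)
      rw [hpart (A + 2), hpart (A + 1)] at this
      omega
    · have h1 := hlo (A + 1) (by omega)
      have h2 := hup A (by omega)
      have := hd (A + 1) (by omega) (by omega)
        (by rw [hpart (A + 1)]; omega)
      rw [hpart (A + 1), hpart A] at this
      omega
  · intro hW2
    by_contra hAe
    have h1 := hlo (A + 1) (by omega)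
    have h2 := hup A (by omega)
    have := hd (A + 1) (by omega) (by omega)
      (by rw [hpart (A + 1)]; omega)
    rw [hpart (A + 1), hpart A] at this
    omega

/-- If a partition has a bad sequence, then it cannot be written as a union
(with multiplicity) of two partitions each satisfying the difference
condition. -/
theorem stmt7 (β : List ℕ) (hβ : IsPartition β) (hb : BadSeq β) :
    ¬ ∃ μ ν : List ℕ, IsPartition μ ∧ IsPartition ν ∧ β.Perm (μ ++ ν) ∧
      DiffCond μ ∧ DiffCond ν := by
  rintro ⟨μ, ν, hμ, hν, hperm, dμ, dν⟩
  obtain ⟨i, hi0, hi2, h1, h2, h3, h4⟩ := hb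
  set a := part β (i + 2) with haa
  have ha : 1 ≤ a := Nat.pos_of_ne_zero h4
  have e1 : β.getD (i - 1) 0 = a + 2 := by
    have : part β i = a + 2 := by rw [h1, h2]
    simpa [part] using this
  have e3 : β.getD (i + 2) 0 = a := by
    have : part β (i + 3) = a := h3.symm
    simpa [part] using this
  -- counts of β
  have hGβ : i + 2 < β.countP (fun x => decide (a ≤ x)) := by
    have := count_char a ha β hβ.1 (i + 2)
    omega
  have hAβ : β.countP (fun x => decide (a + 3 ≤ x)) ≤ i - 1 := by
    have := count_char (a + 3) (by omega) β hβ.1 (i - 1)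
    omega
  have hpc : ∀ p : ℕ → Bool, β.countP p = μ.countP p + ν.countP p := by
    intro p
    rw [hperm.countP_eq, List.countP_append]
  have hsβ := count_split a β
  have hsμ := count_split a μ
  have hsν := count_split a ν
  have hGs := hpc (fun x => decide (a ≤ x))
  have hAs := hpc (fun x => decide (a + 3 ≤ x))
  have hWs := hpc (fun x => decide (a ≤ x ∧ x < a + 3))
  obtain ⟨hWμ, hPμ⟩ := window_lemma μ hμ.1 dμ a ha
  obtain ⟨hWν, hPν⟩ := window_lemma ν hν.1 dν a ha
  have hWμ2 : μ.countP (fun x => decide (a ≤ x ∧ x < a + 3)) = 2 := by omega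
  have hWν2 : ν.countP (fun x => decide (a ≤ x ∧ x < a + 3)) = 2 := by omega
  have h5 := hPμ hWμ2
  have h6 := hPν hWν2
  omega

end Duckworth
end

section
/- Every partition λ of n in which every part of even multiplicity can be split off in pairs can be decomposed as λ = α ⊕ α ⊕ βfor some partitions α and β such that β has distinct odd parts, provided every even part of λ has even multiplicity. That is: if λ is a partition of n all of whose even parts have even multiplicity, then there exist partitions α and β with λ = α ⊕ α ⊕ β and β having distinct, odd parts. -/
namespace Duckworth

/-- If every even part of a partition `λ` of `n` has even multiplicity, then
`λ = α ⊕ α ⊕ β` for some partitions `α`, `β` with `β` having distinct, odd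
parts. -/
theorem stmt14 (n : ℕ) (lam : List ℕ) (hlam : IsPartition lam)
    (hn : lam.sum = n)
    (heven : ∀ x ∈ lam, 2 ∣ x → 2 ∣ lam.count x) :
    ∃ α β : List ℕ, IsPartition α ∧ IsPartition β ∧
      lam.Perm (α ++ α ++ β) ∧ β.Nodup ∧ ∀ x ∈ β, ¬ 2 ∣ x := by
  classical
  set m : Multiset ℕ := (lam : Multiset ℕ) with hm
  set A : Multiset ℕ := ∑ x ∈ m.toFinset, Multiset.replicate (m.count x / 2) x with hAdef
  set B : Multiset ℕ := (m.toFinset.filter (fun x => m.count x % 2 = 1)).val with hBdef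
  have hA : ∀ y, A.count y = m.count y / 2 := by
    intro y
    rw [hAdef, Multiset.count_sum']
    by_cases hy : y ∈ m.toFinset
    · rw [Finset.sum_eq_single y]
      · simp
      · intro b _ hb
        rw [Multiset.count_replicate, if_neg hb]
      · intro h; exact absurd hy h
    · have h0 : m.count y = 0 := by
        rwa [Multiset.mem_toFinset, ← Multiset.count_pos, Nat.pos_iff_ne_zero,
          not_not] at hy
      rw [h0]
      apply Finset.sum_eq_zero
      intro b hb
      rw [Multiset.count_replicate, if_neg]
      intro h; subst h; exact absurd hb hy
  have hBnodup : B.Nodup := by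
    rw [hBdef]; exact (m.toFinset.filter _).nodup
  have hB : ∀ y, B.count y = m.count y % 2 := by
    intro y
    by_cases hy : y ∈ B
    · have h1 : B.count y = 1 := by
        have := hBnodup
        rw [Multiset.nodup_iff_count_le_one] at this
        have h2 := this y
        have h3 := Multiset.one_le_count_iff_mem.mpr hy
        omega
      have : m.count y % 2 = 1 := by
        rw [hBdef] at hy
        simpa using (Finset.mem_filter.mp (Finset.mem_def.mpr hy)).2
      omega
    · have h1 : B.count y = 0 := by
        simpa [Multiset.count_eq_zero] using hy
      have h2 : m.count y % 2 = 0 := by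
        by_contra h
        apply hy
        rw [hBdef]
        have hym : y ∈ m := by
          rw [← Multiset.count_pos]; omega
        exact Finset.mem_filter.mpr ⟨Multiset.mem_toFinset.mpr hym, by omega⟩
      omega
  have hsum : A + A + B = m := by
    ext y
    simp only [Multiset.count_add, hA, hB]
    omega
  have hAmem : ∀ x ∈ A, x ∈ m := by
    intro x hx
    rw [← Multiset.count_pos]
    have := Multiset.one_le_count_iff_mem.mpr hx
    rw [hA] at this
    omega
  have hBmem : ∀ x ∈ B, x ∈ m := by
    intro x hx
    rw [← Multiset.count_pos]
    have := Multiset.one_le_count_iff_mem.mpr hx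
    rw [hB] at this
    omega
  refine ⟨A.sort (· ≥ ·), B.sort (· ≥ ·), ⟨Multiset.pairwise_sort _ _, ?_⟩,
    ⟨Multiset.pairwise_sort _ _, ?_⟩, ?_, ?_, ?_⟩
  · intro x hx
    exact hlam.2 x (by simpa [hm] using hAmem x ((Multiset.mem_sort _).mp hx))
  · intro x hx
    exact hlam.2 x (by simpa [hm] using hBmem x ((Multiset.mem_sort _).mp hx))
  · rw [← Multiset.coe_eq_coe]
    have h4 : ((A.sort (· ≥ ·) ++ A.sort (· ≥ ·) ++ B.sort (· ≥ ·) : List ℕ) :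
        Multiset ℕ) = A + A + B := by
      simp [← Multiset.coe_add, Multiset.sort_eq, add_assoc]
    rw [h4, hsum]
  · rw [← Multiset.coe_nodup, Multiset.sort_eq]; exact hBnodup
  · intro x hx h2
    have hxB : x ∈ B := (Multiset.mem_sort _).mp hx
    have hxm : x ∈ m := hBmem x hxB
    have hodd : m.count x % 2 = 1 := by
      have := Multiset.one_le_count_iff_mem.mpr hxB
      rw [hB] at this; omega
    have := heven x (by simpa [hm] using hxm) h2
    have hcc : m.count x = lam.count x := by simp [hm]
    omega

end Duckworth
end

section
/- If λ is a partition of n in which every odd part strictly greater than 1 has even multiplicity, then there exist partitions α and β with λ = α ⊕ α ⊕ β such that at most one part of β equals 1 and every other part of β is even with multiplicity at most 2. -/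
namespace Duckworth

/-- If every odd part `> 1` of a partition `λ` of `n` has even multiplicity,
then `λ = α ⊕ α ⊕ β` where at most one part of `β` equals 1 and every other
part of `β` is even with multiplicity at most 2. -/
theorem stmt15 (n : ℕ) (lam : List ℕ) (hlam : IsPartition lam)
    (hn : lam.sum = n)
    (hodd : ∀ x ∈ lam, ¬ 2 ∣ x → 1 < x → 2 ∣ lam.count x) :
    ∃ α β : List ℕ, IsPartition α ∧ IsPartition β ∧
      lam.Perm (α ++ α ++ β) ∧ β.count 1 ≤ 1 ∧
      ∀ x ∈ β, x ≠ 1 → 2 ∣ x ∧ β.count x ≤ 2 := by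
  classical
  set M : Multiset ℕ := (lam : Multiset ℕ) with hMdef
  set A : Multiset ℕ := M.toFinset.sum (fun x => (M.count x / 2) • ({x} : Multiset ℕ)) with hA
  set B : Multiset ℕ := M.toFinset.sum (fun x => (M.count x % 2) • ({x} : Multiset ℕ)) with hB
  have key : ∀ (g : ℕ → ℕ) (y : ℕ),
      Multiset.count y (M.toFinset.sum (fun x => g (M.count x) • ({x} : Multiset ℕ)))
        = if M.count y = 0 then 0 else g (M.count y) := by
    intro g y
    rw [Multiset.count_sum']
    simp only [Multiset.count_nsmul, Multiset.count_singleton]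
    by_cases hy : y ∈ M.toFinset
    · rw [Finset.sum_eq_single_of_mem y hy]
      · have : M.count y ≠ 0 := by
          simpa [Multiset.count_eq_zero] using Multiset.mem_toFinset.1 hy
        simp [this]
      · intro x _ hxy
        simp [Ne.symm hxy]
    · have h0 : M.count y = 0 := by
        rw [Multiset.count_eq_zero]
        exact fun h => hy (Multiset.mem_toFinset.2 h)
      rw [h0]
      simp only [if_pos rfl]
      apply Finset.sum_eq_zero
      intro x hx
      have : y ≠ x := by
        rintro rfl; exact hy hx
      simp [this]
  have hcA : ∀ y, A.count y = M.count y / 2 := by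
    intro y; rw [hA, key (· / 2) y]; split <;> omega
  have hcB : ∀ y, B.count y = M.count y % 2 := by
    intro y; rw [hB, key (· % 2) y]; split <;> omega
  have hM : M = A + A + B := by
    ext y
    simp only [Multiset.count_add, hcA, hcB]
    omega
  have hposM : ∀ x, x ∈ M → 0 < x := by
    intro x hx; exact hlam.2 x (by simpa [hMdef] using hx)
  refine ⟨A.sort (· ≥ ·), B.sort (· ≥ ·), ⟨Multiset.pairwise_sort _ _, ?_⟩,
    ⟨Multiset.pairwise_sort _ _, ?_⟩, ?_, ?_, ?_⟩
  · intro x hx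
    have hxA : x ∈ A := by rwa [Multiset.mem_sort] at hx
    apply hposM
    rw [← Multiset.count_pos]
    have := Multiset.count_pos.2 hxA
    rw [hcA x] at this
    omega
  · intro x hx
    have hxB : x ∈ B := by rwa [Multiset.mem_sort] at hx
    apply hposM
    rw [← Multiset.count_pos]
    have := Multiset.count_pos.2 hxB
    rw [hcB x] at this
    omega
  · rw [← Multiset.coe_eq_coe]
    show M = (↑(Multiset.sort A (· ≥ ·)) + ↑(Multiset.sort A (· ≥ ·)) + ↑(Multiset.sort B (· ≥ ·)) : Multiset ℕ)
    rw [Multiset.sort_eq, Multiset.sort_eq]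
    exact hM
  · rw [← Multiset.coe_count, Multiset.sort_eq, hcB]
    omega
  · intro x hx hx1
    have hxB : x ∈ B := by rwa [Multiset.mem_sort] at hx
    have hodd' : M.count x % 2 = 1 := by
      have := Multiset.count_pos.2 hxB
      rw [hcB x] at this
      omega
    have hxM : x ∈ M := by
      rw [← Multiset.count_pos]; omega
    have hx2 : 2 ∣ x := by
      by_contra h2
      have hx1' : 1 < x := by
        have := hposM x hxM
        omega
      have := hodd x (by simpa [hMdef] using hxM) h2 hx1'
      have hc : M.count x = lam.count x := Multiset.coe_count x lam
      omega
    refine ⟨hx2, ?_⟩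
    rw [← Multiset.coe_count, Multiset.sort_eq, hcB]
    omega

end Duckworth
end
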